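/- Let C ≤ F be a k-dimensional code, n = dim F, and A a collection of subspaces with duals forming a collection of perfect spaces. Let t_j = min{dim A : A ∈ A, dim(C∩A) ≥ j} and s_1^⊥ = min{dim A : A ∈ Ā (duals of A), dim(C^⊥ ∩ A) ≥ 1}. Then B_a^{(j)}(C) = Σ_{A ∈ A_a} [dim(C∩A) choose j]_q equals 0 if a < t_j, and equals [k+a−n choose j]_q · |A_a| if a > n − s_1^⊥, where A_a is the set of elements of A of dimension a. -/

import Mathlib

open scoped Classical

noncomputable section

namespace TensorCodes

/-- The Gaussian (`q`-binomial) coefficient for integer arguments, following the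
definition in the paper. -/
def qbin (q : ℚ) (a b : ℤ) : ℚ :=
  if b < 0 then 0
  else if b = 0 then 1
  else if a < 0 then
    (-1) ^ b.toNat * q ^ (a * b - b * (b - 1) / 2) *
      ∏ i ∈ Finset.range b.toNat, (q ^ (-a + b - 1 - (i : ℤ)) - 1) / (q ^ ((i : ℤ) + 1) - 1)
  else if a < b then 0
  else ∏ i ∈ Finset.range b.toNat, (q ^ (a - (i : ℤ)) - 1) / (q ^ ((i : ℤ) + 1) - 1)

variable {K : Type} [Field K] [Fintype K] {r : ℕ} {n : Fin r → ℕ}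

/-- A simple (rank-one) tensor `u⁽¹⁾ ⊗ ⋯ ⊗ u⁽ʳ⁾`, in the identification of
`𝔽_q^{n_1} ⊗ ⋯ ⊗ 𝔽_q^{n_r}` with the space of `r`-dimensional arrays. -/
def simpleTensor (u : ∀ i, Fin (n i) → K) : ((i : Fin r) → Fin (n i)) → K :=
  fun J => ∏ i, u i (J i)

/-- The tensor product `U₁ ⊗ ⋯ ⊗ U_r` of subspaces `U i ≤ 𝔽_q^{n_i}`, identified with the
subspace of the array space spanned by the corresponding simple tensors. -/
def tp (U : ∀ i, Submodule K (Fin (n i) → K)) :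
    Submodule K (((i : Fin r) → Fin (n i)) → K) :=
  Submodule.span K {X | ∃ u : ∀ i, Fin (n i) → K, (∀ i, u i ∈ U i) ∧ X = simpleTensor u}

/-- The dual (orthogonal complement) of a tensor code with respect to the nondegenerate
bilinear form `X * Y = ∑_J X_J Y_J`. -/
def tdual (C : Submodule K (((i : Fin r) → Fin (n i)) → K)) :
    Submodule K (((i : Fin r) → Fin (n i)) → K) where
  carrier := {X | ∀ Y ∈ C, ∑ J, X J * Y J = 0}
  add_mem' := by
    intro a b ha hb Y hY
    have h : ∑ J, (a J * Y J + b J * Y J) = 0 := by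
      rw [Finset.sum_add_distrib, ha Y hY, hb Y hY, add_zero]
    simpa [add_mul] using h
  zero_mem' := by intro Y hY; simp
  smul_mem' := by
    intro c a ha Y hY
    have h := ha Y hY
    simp only [Pi.smul_apply, smul_eq_mul, mul_assoc]
    rw [← Finset.mul_sum, h, mul_zero]

/-- The orthogonal complement of a subspace of `𝔽_q^m` with respect to the dot product. -/
def vdual {m : ℕ} (U : Submodule K (Fin m → K)) : Submodule K (Fin m → K) where
  carrier := {x | ∀ y ∈ U, ∑ t, x t * y t = 0}
  add_mem' := by
    intro a b ha hb y hy
    have h : ∑ t, (a t * y t + b t * y t) = 0 := by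
      rw [Finset.sum_add_distrib, ha y hy, hb y hy, add_zero]
    simpa [add_mul] using h
  zero_mem' := by intro y hy; simp
  smul_mem' := by
    intro c a ha y hy
    have h := ha y hy
    simp only [Pi.smul_apply, smul_eq_mul, mul_assoc]
    rw [← Finset.mul_sum, h, mul_zero]

/-- A subspace is perfect if it is spanned by the simple (rank-one) tensors it contains. -/
def IsPerfect (A : Submodule K (((i : Fin r) → Fin (n i)) → K)) : Prop :=
  A = Submodule.span K ((A : Set (((i : Fin r) → Fin (n i)) → K)) ∩
    {X | ∃ u : ∀ i, Fin (n i) → K, X = simpleTensor u})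

/-- The tensor rank of an `r`-tensor: the least number of simple tensors summing to it. -/
def trank (X : ((i : Fin r) → Fin (n i)) → K) : ℕ :=
  sInf {R | ∃ u : Fin R → ∀ i, Fin (n i) → K, X = ∑ s, simpleTensor (u s)}

/-- The minimum tensor-rank distance of a (nonzero) tensor code. -/
def minDist (C : Submodule K (((i : Fin r) → Fin (n i)) → K)) : ℕ :=
  sInf {d | ∃ X ∈ C, X ≠ (0 : ((i : Fin r) → Fin (n i)) → K) ∧ trank X = d}

/-- The tensor rank of a tensor code: the minimum dimension of a perfect space containing it. -/
def trk (C : Submodule K (((i : Fin r) → Fin (n i)) → K)) : ℕ :=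
  sInf {a | ∃ A : Submodule K (((i : Fin r) → Fin (n i)) → K),
    IsPerfect A ∧ C ≤ A ∧ Module.finrank K ↥A = a}

/-- The `j`-th generalized tensor weight of `C` with respect to a collection `𝒜` of
anticodes:  the minimum dimension of a member of `𝒜` meeting `C` in dimension at least `j`. -/
def genW {V : Type} [AddCommGroup V] [Module K V] (𝒜 : Set (Submodule K V))
    (C : Submodule K V) (j : ℕ) : ℕ :=
  sInf {a | ∃ A ∈ 𝒜, Module.finrank K ↥A = a ∧ j ≤ Module.finrank K ↥(C ⊓ A)}

/-! Both extremes are dimension counts. If `a < t_j`, every `A ∈ 𝒜_a` meets `C` in dimension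
less than `j`, and `[m, j]_q = 0` for `0 ≤ m < j`. If `a > n - s₁^⊥`, then `dim A^⊥ = n - a < s₁^⊥`
forces `C^⊥ ∩ A^⊥ = 0`; as `C^⊥ ∩ A^⊥ = (C + A)^⊥`, the sum `C + A` is the whole space, so
`dim (C ∩ A) = k + a - n` for every `A ∈ 𝒜_a`. -/

theorem qbin_eq_zero_of_lt (q : ℚ) {m j : ℤ} (hm : 0 ≤ m) (h : m < j) : qbin q m j = 0 := by
  rw [qbin, if_neg (by omega), if_neg (by omega), if_neg (by omega), if_pos h]

omit [Fintype K] in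
theorem finrank_inf_lt_of_lt_genW {V : Type} [AddCommGroup V] [Module K V]
    {𝒜 : Set (Submodule K V)} {C A : Submodule K V} {j : ℕ} (hA : A ∈ 𝒜)
    (h : Module.finrank K A < genW 𝒜 C j) : Module.finrank K ↥(C ⊓ A) < j := by
  by_contra! hj
  exact h.not_ge (Nat.sInf_le ⟨A, hA, rfl, hj⟩ : genW 𝒜 C j ≤ _)

theorem _root_.Subspace.finrank_inf_add_finrank_eq {F V : Type*} [Field F] [AddCommGroup V]
    [Module F V] [FiniteDimensional F V] (W W' : Subspace F V) :
    Module.finrank F ↥(W ⊓ W') + Module.finrank F V =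
      Module.finrank F W + Module.finrank F W' +
        Module.finrank F ↥(W.dualAnnihilator ⊓ W'.dualAnnihilator) := by
  rw [← Submodule.dualAnnihilator_sup_eq,
    ← Subspace.finrank_add_finrank_dualAnnihilator_eq (W ⊔ W'),
    ← Submodule.finrank_sup_add_finrank_inf_eq]
  ring

omit [Fintype K] in
theorem tdual_eq_comap_dualAnnihilator (C : Submodule K (((i : Fin r) → Fin (n i)) → K)) :
    tdual C =
      C.dualAnnihilator.comap (dotProductEquiv K ((i : Fin r) → Fin (n i))).toLinearMap := by
  ext X
  simp [tdual, Submodule.mem_dualAnnihilator, dotProduct]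

omit [Fintype K] in
theorem finrank_tensorSpace : Module.finrank K (((i : Fin r) → Fin (n i)) → K) = ∏ i, n i := by
  simp [Module.finrank_fintype_fun_eq_card, Fintype.card_pi]

omit [Fintype K] in
theorem finrank_add_finrank_tdual (C : Submodule K (((i : Fin r) → Fin (n i)) → K)) :
    Module.finrank K C + Module.finrank K ↥(tdual C) = ∏ i, n i := by
  rw [tdual_eq_comap_dualAnnihilator,
    (LinearEquiv.ofSubmodule' (dotProductEquiv K _) _).finrank_eq, Subspace.finrank_add_finrank_dualAnnihilator_eq, finrank_tensorSpace]

omit [Fintype K] in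
theorem finrank_inf_add_prod_eq (C A : Submodule K (((i : Fin r) → Fin (n i)) → K)) :
    Module.finrank K ↥(C ⊓ A) + ∏ i, n i =
      Module.finrank K C + Module.finrank K A + Module.finrank K ↥(tdual C ⊓ tdual A) := by
  rw [← finrank_tensorSpace (K := K), Subspace.finrank_inf_add_finrank_eq,
    tdual_eq_comap_dualAnnihilator, tdual_eq_comap_dualAnnihilator, ← Submodule.comap_inf,
    (LinearEquiv.ofSubmodule' (dotProductEquiv K _) _).finrank_eq]

theorem binomial_moment_extremes_general
    (𝒜 : Finset (Submodule K (((i : Fin r) → Fin (n i)) → K)))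
    (C : Submodule K (((i : Fin r) → Fin (n i)) → K))
    (a j : ℕ) :
    (a < genW (↑𝒜 : Set (Submodule K (((i : Fin r) → Fin (n i)) → K))) C j →
        ∑ A ∈ 𝒜.filter (fun A : Submodule K (((i : Fin r) → Fin (n i)) → K) => Module.finrank K ↥A = a),
            qbin (Fintype.card K : ℚ) (Module.finrank K ↥(C ⊓ A) : ℤ) (j : ℤ) = 0)
      ∧ ((∏ i, n i)
            - sInf {b | ∃ A ∈ 𝒜, Module.finrank K ↥(tdual A) = b ∧
                1 ≤ Module.finrank K ↥(tdual C ⊓ tdual A)} < a →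
          ∑ A ∈ 𝒜.filter (fun A : Submodule K (((i : Fin r) → Fin (n i)) → K) => Module.finrank K ↥A = a),
              qbin (Fintype.card K : ℚ) (Module.finrank K ↥(C ⊓ A) : ℤ) (j : ℤ)
            = qbin (Fintype.card K : ℚ)
                ((Module.finrank K ↥C : ℤ) + (a : ℤ) - ∏ i, (n i : ℤ)) (j : ℤ)
              * (𝒜.filter (fun A : Submodule K (((i : Fin r) → Fin (n i)) → K) => Module.finrank K ↥A = a)).card) := by
  constructor
  · intro hlt
    refine Finset.sum_eq_zero fun A hA => ?_
    obtain ⟨hA𝒜, rfl⟩ := Finset.mem_filter.1 hA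
    exact qbin_eq_zero_of_lt _ (Int.natCast_nonneg _)
      (Int.ofNat_lt.2 (finrank_inf_lt_of_lt_genW hA𝒜 hlt))
  · set s := sInf {b | ∃ A ∈ 𝒜, Module.finrank K ↥(tdual A) = b ∧
      1 ≤ Module.finrank K ↥(tdual C ⊓ tdual A)}
    intro hgt
    rw [Finset.sum_congr rfl fun A hA => ?_, Finset.sum_const, nsmul_eq_mul, mul_comm]
    obtain ⟨hA𝒜, rfl⟩ := Finset.mem_filter.1 hA
    have hdual := finrank_add_finrank_tdual A
    have hdisjoint : Module.finrank K ↥(tdual C ⊓ tdual A) = 0 := by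
      by_contra h
      have hs : s ≤ Module.finrank K ↥(tdual A) :=
        Nat.sInf_le ⟨A, hA𝒜, rfl, Nat.one_le_iff_ne_zero.2 h⟩
      omega
    have hdim := finrank_inf_add_prod_eq C A
    rw [← Nat.cast_prod]
    congr 1
    omega

/-- if `a < t_j` then `B_a^{(j)}(C) = 0`, and if `a > n − s_1^⊥` then
`B_a^{(j)}(C) = [k+a−n, j]_q · |𝒜_a|`, for a collection `𝒜` whose duals are perfect. -/
theorem binomial_moment_extremes
    (𝒜 : Finset (Submodule K (((i : Fin r) → Fin (n i)) → K)))
    (hperf : ∀ A ∈ 𝒜, IsPerfect (tdual A))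
    (C : Submodule K (((i : Fin r) → Fin (n i)) → K))
    (a j : ℕ) (hj1 : 1 ≤ j) (hjk : j ≤ Module.finrank K ↥C) (ha : a ≤ ∏ i, n i) :
    (a < genW (↑𝒜 : Set (Submodule K (((i : Fin r) → Fin (n i)) → K))) C j →
        ∑ A ∈ 𝒜.filter (fun A : Submodule K (((i : Fin r) → Fin (n i)) → K) => Module.finrank K ↥A = a),
            qbin (Fintype.card K : ℚ) (Module.finrank K ↥(C ⊓ A) : ℤ) (j : ℤ) = 0)
      ∧ ((∏ i, n i)
            - sInf {b | ∃ A ∈ 𝒜, Module.finrank K ↥(tdual A) = b ∧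
                1 ≤ Module.finrank K ↥(tdual C ⊓ tdual A)} < a →
          ∑ A ∈ 𝒜.filter (fun A : Submodule K (((i : Fin r) → Fin (n i)) → K) => Module.finrank K ↥A = a),
              qbin (Fintype.card K : ℚ) (Module.finrank K ↥(C ⊓ A) : ℤ) (j : ℤ)
            = qbin (Fintype.card K : ℚ)
                ((Module.finrank K ↥C : ℤ) + (a : ℤ) - ∏ i, (n i : ℤ)) (j : ℤ)
              * (𝒜.filter (fun A : Submodule K (((i : Fin r) → Fin (n i)) → K) => Module.finrank K ↥A = a)).card) :=
  binomial_moment_extremes_general 𝒜 C a j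

end TensorCodes
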